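/- (Difference bound between the two scattering transforms.) Let 𝓡 be the rotational uniform covering frame on ℝ² with parameters (A, B). For all f, g ∈ L²(ℝ²): ‖Φ₀f − Φ₀g‖²_{L²} + ∑_{k=1}^∞ ∑_{q∈𝒬_k} ‖Φ_q f − Φ_q g‖²_{L²} ≤ ‖f ⋆ f₀ − g ⋆ f₀‖²_{L²} + ∑_{k=1}^∞ ∑_{p∈𝒢^k} ‖U[p]f ⋆ f₀ − U[p]g ⋆ f₀‖²_{L²}; that is, the L²ℓ² distance between the rotational Fourier scattering transforms of f and g is at most the L²ℓ² distance between their Fourier scattering transforms with respect to 𝓡. -/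

import Mathlib

open MeasureTheory Complex Real

noncomputable section

/-- `m*`: the unique power of two with `m ≤ m* < 2m`. -/
def mstar (m : ℕ) : ℕ := 2 ^ Nat.clog 2 m

/-- The rotation of `ℝ² = ℂ` by the angle `2πj/n`, as a unit complex number. -/
def rotC (n : ℕ) (j : ℕ) : ℂ := Complex.exp (2 * Real.pi * Complex.I * j / n)

/-- The finite rotation group `G_m` (the rotations of `ℝ² = ℂ` by integer multiples of the
angle `2π/(m* B)`), realized as a finset of unit complex numbers.  `G = Gm B 1` consists of
the rotations by integer multiples of `2π/B`. -/
def Gm (B m : ℕ) : Finset ℂ := (Finset.range (mstar m * B)).image (rotC (mstar m * B))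

/-- The real dot product on `ℝ² = ℂ`. -/
def dotR (x ξ : ℂ) : ℝ := (x * (starRingEnd ℂ) ξ).re

/-- The Fourier transform on `ℝ² = ℂ`. -/
def FT (f : ℂ → ℂ) (ξ : ℂ) : ℂ :=
  ∫ x : ℂ, Complex.exp (-(2 * Real.pi * Complex.I) * (dotR x ξ)) * f x

/-- Convolution on `ℝ² = ℂ`. -/
def conv (u v : ℂ → ℂ) (x : ℂ) : ℂ := ∫ y : ℂ, u (x - y) * v y

/-- A rotational uniform covering frame on `ℝ² = ℂ` with parameters `A`, `B`:
the data of the window `η`, the angular windows `β m`, and the Schwartz frame elements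
`f0` and `f m r` (the latter indexed by `m ≥ 1` and `r ∈ G_m`), subject to the defining
properties. -/
structure RotUCF (A : ℝ) (B : ℕ) where
  hA : 0 < A
  hB : 1 ≤ B
  η : ℝ → ℝ
  β : ℕ → ℝ → ℝ
  f0 : SchwartzMap ℂ ℂ
  f : ℕ → ℂ → SchwartzMap ℂ ℂ
  η_nonneg : ∀ x : ℝ, 0 ≤ η x
  η_even : ∀ x : ℝ, η (-x) = η x
  η_smooth : ContDiff ℝ (⊤ : ℕ∞) η
  η_supp : ∀ x : ℝ, A < |x| → η x = 0
  η_partition : ∀ x : ℝ, ∑' k : ℤ, (η (x - A * k)) ^ 2 = 1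
  β_nonneg : ∀ m, ∀ x : ℝ, 0 ≤ β m x
  β_smooth : ∀ m, 1 ≤ m → ContDiff ℝ (⊤ : ℕ∞) (β m)
  β_periodic : ∀ m, 1 ≤ m → Function.Periodic (β m) (2 * Real.pi)
  β_supp : ∀ m, 1 ≤ m → ∀ x : ℝ,
    (∀ k : ℤ, 2 * Real.pi / (mstar m * B) < |x - 2 * Real.pi * k|) → β m x = 0
  β_partition : ∀ m, 1 ≤ m → ∀ x : ℝ,
    ∑ j ∈ Finset.range (mstar m * B), (β m (x - 2 * Real.pi * j / (mstar m * B))) ^ 2 = 1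
  FT_f0 : ∀ ξ : ℂ, FT f0 ξ = ((η ‖ξ‖ : ℝ) : ℂ)
  FT_f : ∀ m, 1 ≤ m → ∀ r ∈ Gm B m, ∀ ξ : ℂ, ξ ≠ 0 →
    FT (f m r) ξ = ((η (‖ξ‖ - m * A) * β m ((r⁻¹ * ξ).arg) : ℝ) : ℂ)
  FT_f_zero : ∀ m, 1 ≤ m → ∀ r ∈ Gm B m, FT (f m r) 0 = 0

variable {A : ℝ} {B : ℕ}

/-- Membership in the index set `𝒢 = {(m, r) : m ≥ 1, r ∈ G_m}`. -/
def validIdx (B : ℕ) (a : ℕ × ℂ) : Prop := 1 ≤ a.1 ∧ a.2 ∈ Gm B a.1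

/-- Membership in the transversal `𝒢₀ = {(m, ρ_{m,j}) : m ≥ 1, 0 ≤ j < m*}` of the
cosets of `G` in `𝒢`. -/
def transIdx (B : ℕ) (a : ℕ × ℂ) : Prop :=
  1 ≤ a.1 ∧ ∃ j < mstar a.1, a.2 = rotC (mstar a.1 * B) j

/-- A list all of whose entries lie in `𝒢`. -/
def ValidList (B : ℕ) (p : List (ℕ × ℂ)) : Prop := ∀ a ∈ p, validIdx B a

/-- The set `𝒢^k` of `k`-tuples of indices, as a type. -/
def Gk (B k : ℕ) : Type := {p : List (ℕ × ℂ) // p.length = k ∧ ValidList B p}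

/-- The set `𝒬_k = 𝒢₀ × 𝒢^{k-1} ⊆ 𝒢^k`, as a type. -/
def Qk (B k : ℕ) : Type :=
  {p : List (ℕ × ℂ) // p.length = k ∧ ValidList B p ∧ transIdx B p.headI}

/-- The set `𝒬[M,k]` of those `q ∈ 𝒬_k` all of whose indices `(m,r)` satisfy `m ≤ M`. -/
def QkM (B M k : ℕ) : Type :=
  {p : List (ℕ × ℂ) // p.length = k ∧ ValidList B p ∧ transIdx B p.headI ∧ ∀ a ∈ p, a.1 ≤ M}

/-- The left action `rp = (rp₁, …, rp_k)` of `r ∈ G` on a tuple of indices,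
where `r(m, s) = (m, rs)`. -/
def actL (r : ℂ) (p : List (ℕ × ℂ)) : List (ℕ × ℂ) := p.map fun a => (a.1, r * a.2)

/-- The rotation `g_r(x) = g(rx)` of a function by `r`. -/
def rotF (r : ℂ) (g : ℂ → ℂ) : ℂ → ℂ := fun x => g (r * x)

/-- The scattering propagator `U[p]f = |⋯||f ⋆ f_{p₁}| ⋆ f_{p₂}|⋯ ⋆ f_{p_k}|`. -/
def U (𝓡 : RotUCF A B) : List (ℕ × ℂ) → (ℂ → ℂ) → (ℂ → ℂ)
  | [], g => g
  | a :: p, g => U 𝓡 p fun x => ((‖conv g (⇑(𝓡.f a.1 a.2)) x‖ : ℝ) : ℂ)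

/-- The zeroth feature map `Φ₀f(x) = B^{-1/2} (∑_{s ∈ G} |(f ⋆ f₀)(sx)|²)^{1/2}`. -/
def Phi0 (𝓡 : RotUCF A B) (g : ℂ → ℂ) : ℂ → ℝ :=
  fun x => (B : ℝ) ^ (-(1 : ℝ) / 2) * Real.sqrt (∑ s ∈ Gm B 1, ‖conv g (⇑𝓡.f0) (s * x)‖ ^ 2)

/-- The feature map `Φ_q f(x) = (∑_{s ∈ G} |(U[sq]f ⋆ f₀)(sx)|²)^{1/2}` for `q ∈ 𝒬_k`. -/
def PhiQ (𝓡 : RotUCF A B) (q : List (ℕ × ℂ)) (g : ℂ → ℂ) : ℂ → ℝ :=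
  fun x => Real.sqrt (∑ s ∈ Gm B 1, ‖conv (U 𝓡 (actL s q) g) (⇑𝓡.f0) (s * x)‖ ^ 2)


section AuxAlg

lemma mstar_pos (m : ℕ) : 0 < mstar m := Nat.pow_pos (by norm_num)

lemma mstar_one : mstar 1 = 1 := by simp [mstar, Nat.clog_one_right]

lemma rotC_eq_pow (n j : ℕ) : rotC n j = rotC n 1 ^ j := by
  rw [rotC, rotC, ← Complex.exp_nat_mul]
  ring_nf

lemma mem_Gm_iff {B m : ℕ} (hB : 1 ≤ B) {z : ℂ} :
    z ∈ Gm B m ↔ z ^ (mstar m * B) = 1 := by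
  have hn : mstar m * B ≠ 0 := Nat.mul_ne_zero (mstar_pos m).ne' (by omega)
  have hprim := Complex.isPrimitiveRoot_exp (mstar m * B) hn
  have hζ : rotC (mstar m * B) 1 = Complex.exp (2 * Real.pi * Complex.I / ((mstar m * B : ℕ) : ℂ)) := by
    rw [rotC]; norm_num
  constructor
  · rintro hzmem
    simp only [Gm, Finset.mem_image, Finset.mem_range] at hzmem
    obtain ⟨j, hj, rfl⟩ := hzmem
    rw [rotC_eq_pow, hζ, ← pow_mul, mul_comm j, pow_mul, hprim.pow_eq_one, one_pow]
  · intro hz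
    have : NeZero (mstar m * B) := ⟨hn⟩
    obtain ⟨j, hj, hje⟩ := hprim.eq_pow_of_pow_eq_one hz
    simp only [Gm, Finset.mem_image, Finset.mem_range]
    exact ⟨j, hj, by rw [rotC_eq_pow, hζ, hje]⟩

lemma norm_of_mem_Gm {B m : ℕ} (hB : 1 ≤ B) {z : ℂ} (hz : z ∈ Gm B m) : ‖z‖ = 1 := by
  rw [mem_Gm_iff hB] at hz
  have hn : mstar m * B ≠ 0 := Nat.mul_ne_zero (mstar_pos m).ne' (by omega)
  have : ‖z‖ ^ (mstar m * B) = 1 := by rw [← norm_pow, hz, norm_one]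
  rcases lt_trichotomy ‖z‖ 1 with h | h | h
  · have h2 := pow_lt_one₀ (norm_nonneg z) h hn
    linarith
  · exact h
  · have h2 := one_lt_pow₀ h hn
    linarith

lemma ne_zero_of_mem_Gm {B m : ℕ} (hB : 1 ≤ B) {z : ℂ} (hz : z ∈ Gm B m) : z ≠ 0 := by
  intro h; have := norm_of_mem_Gm hB hz; rw [h] at this; simp at this

lemma G_pow_B {B : ℕ} (hB : 1 ≤ B) {s : ℂ} (hs : s ∈ Gm B 1) : s ^ B = 1 := by
  have := (mem_Gm_iff hB).mp hs
  rwa [mstar_one, one_mul] at this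

lemma G_mul_mem_Gm {B m : ℕ} (hB : 1 ≤ B) {s z : ℂ} (hs : s ∈ Gm B 1) (hz : z ∈ Gm B m) :
    s * z ∈ Gm B m := by
  rw [mem_Gm_iff hB] at hz ⊢
  rw [mul_pow, hz, mul_one, mul_comm (mstar m) B, pow_mul, G_pow_B hB hs, one_pow]

/-- Uniqueness of the coset decomposition. -/
lemma decomp_unique {B : ℕ} (hB : 1 ≤ B) {m : ℕ} {s s' : ℂ}
    (hs : s ∈ Gm B 1) (hs' : s' ∈ Gm B 1) {t t' : ℕ}
    (ht : t < mstar m) (ht' : t' < mstar m)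
    (h : s * rotC (mstar m * B) t = s' * rotC (mstar m * B) t') : s = s' ∧ t = t' := by
  have hn : mstar m * B ≠ 0 := Nat.mul_ne_zero (mstar_pos m).ne' (by omega)
  have hprim := Complex.isPrimitiveRoot_exp (mstar m * B) hn
  have hζ : rotC (mstar m * B) 1 = Complex.exp (2 * Real.pi * Complex.I / ((mstar m * B : ℕ) : ℂ)) := by
    rw [rotC]; norm_num
  have hBpos : 0 < B := hB
  -- raise to the power B
  have hpow : rotC (mstar m * B) t ^ B = rotC (mstar m * B) t' ^ B := by
    have := congrArg (· ^ B) h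
    simpa only [mul_pow, G_pow_B hB hs, G_pow_B hB hs', one_mul] using this
  have htt : t = t' := by
    have h1 : (Complex.exp (2 * Real.pi * Complex.I / ((mstar m * B : ℕ) : ℂ))) ^ (t * B)
        = (Complex.exp (2 * Real.pi * Complex.I / ((mstar m * B : ℕ) : ℂ))) ^ (t' * B) := by
      rw [pow_mul, pow_mul, ← hζ, ← rotC_eq_pow, ← rotC_eq_pow] at *
      exact hpow
    have := hprim.pow_inj ((Nat.mul_lt_mul_right hBpos).mpr ht) ((Nat.mul_lt_mul_right hBpos).mpr ht') h1
    exact Nat.eq_of_mul_eq_mul_right hBpos this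
  refine ⟨?_, htt⟩
  subst htt
  have hne : rotC (mstar m * B) t ≠ 0 := by
    rw [rotC]; exact Complex.exp_ne_zero _
  exact mul_right_cancel₀ hne h


end AuxAlg

end

open scoped ENNReal

noncomputable section
variable {A : ℝ} {B : ℕ}


section AuxMeas

lemma mp_rot {s : ℂ} (hs : ‖s‖ = 1) :
    MeasurePreserving (fun x : ℂ => s * x) volume volume := by
  let c : Circle := ⟨s, mem_sphere_zero_iff_norm.mpr hs⟩
  have h1 : MeasurePreserving (rotation c) volume volume :=
    (rotation c).measurePreserving
  have he : ⇑(rotation c) = fun x : ℂ => s * x := funext fun x => rotation_apply c x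
  rwa [he] at h1

lemma lintegral_rot {s : ℂ} (hs : ‖s‖ = 1) (F : ℂ → ℝ≥0∞) :
    ∫⁻ x, F (s * x) = ∫⁻ x, F x := by
  let c : Circle := ⟨s, mem_sphere_zero_iff_norm.mpr hs⟩
  have h1 : MeasurePreserving (rotation c) volume volume :=
    (rotation c).measurePreserving
  have h2 : MeasurableEmbedding (rotation c) :=
    (rotation c).toHomeomorph.measurableEmbedding
  have h3 := h1.lintegral_comp_emb h2 F
  rw [show ⇑(rotation c) = fun x : ℂ => s * x from funext fun x => rotation_apply c x] at h3
  exact h3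

lemma conv_congr_left {u u' : ℂ → ℂ} (φ : ℂ → ℂ) (h : u =ᵐ[volume] u') (x : ℂ) :
    conv u φ x = conv u' φ x := by
  refine integral_congr_ae ?_
  have h1 : MeasurePreserving (fun y : ℂ => x - y) volume volume := by
    have ha : MeasurePreserving (fun y : ℂ => -y) volume volume :=
      Measure.measurePreserving_neg volume
    have hb : MeasurePreserving (fun y : ℂ => x + y) volume volume :=
      measurePreserving_add_left volume x
    simpa [sub_eq_add_neg, Function.comp_def] using hb.comp ha
  have h2 := h1.quasiMeasurePreserving.ae_eq h
  filter_upwards [h2] with y hy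
  simp only [Function.comp] at hy
  rw [hy]

lemma sm_conv {u : ℂ → ℂ} (hu : StronglyMeasurable u) {φ : ℂ → ℂ}
    (hφ : Continuous φ) : StronglyMeasurable (conv u φ) := by
  have hF : StronglyMeasurable (fun p : ℂ × ℂ => u (p.1 - p.2) * φ p.2) :=
    (hu.comp_measurable (measurable_fst.sub measurable_snd)).mul
      (hφ.stronglyMeasurable.comp_measurable measurable_snd)
  exact hF.integral_prod_right'

lemma aesm_conv {u : ℂ → ℂ} (hu : AEStronglyMeasurable u volume) {φ : ℂ → ℂ}
    (hφ : Continuous φ) : AEStronglyMeasurable (conv u φ) volume := by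
  obtain ⟨u', hsm, heq⟩ := hu
  have : conv u φ = conv u' φ := funext (conv_congr_left φ heq)
  rw [this]
  exact (sm_conv hsm hφ).aestronglyMeasurable

lemma aesm_U {A : ℝ} {B : ℕ} (𝓡 : RotUCF A B) (p : List (ℕ × ℂ)) {u : ℂ → ℂ}
    (hu : AEStronglyMeasurable u volume) : AEStronglyMeasurable (U 𝓡 p u) volume := by
  induction p generalizing u with
  | nil => exact hu
  | cons a q ih =>
      show AEStronglyMeasurable (U 𝓡 q _) volume
      exact ih (Complex.continuous_ofReal.comp_aestronglyMeasurable
        (aesm_conv hu (𝓡.f a.1 a.2).continuous).norm)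

end AuxMeas


section AuxNorm

lemma sqrt_l2_diff {ι : Type*} (t : Finset ι) (a b : ι → ℝ) :
    |Real.sqrt (∑ i ∈ t, a i ^ 2) - Real.sqrt (∑ i ∈ t, b i ^ 2)| ≤
      Real.sqrt (∑ i ∈ t, (a i - b i) ^ 2) := by
  classical
  have hnorm : ∀ c : ι → ℝ,
      ‖(WithLp.equiv 2 (∀ _ : t, ℝ)).symm (fun i => c i)‖ = Real.sqrt (∑ i ∈ t, c i ^ 2) := by
    intro c
    rw [EuclideanSpace.norm_eq]
    congr 1
    rw [← Finset.sum_coe_sort t (fun i => c i ^ 2)]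
    refine Finset.sum_congr rfl fun i _ => ?_
    rw [WithLp.equiv_symm_apply, PiLp.toLp_apply, Real.norm_eq_abs, _root_.sq_abs]
  have h := abs_norm_sub_norm_le ((WithLp.equiv 2 (∀ _ : t, ℝ)).symm (fun i => a i))
    ((WithLp.equiv 2 (∀ _ : t, ℝ)).symm (fun i => b i))
  have hAB : (WithLp.equiv 2 (∀ _ : t, ℝ)).symm (fun i => a i) -
      (WithLp.equiv 2 (∀ _ : t, ℝ)).symm (fun i => b i) =
      (WithLp.equiv 2 (∀ _ : t, ℝ)).symm (fun i => a i - b i) := rfl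
  rw [hnorm a, hnorm b, hAB, hnorm (fun i => a i - b i)] at h
  exact h

lemma l2_norm_diff {ι : Type*} {E : Type*} [NormedAddCommGroup E] (t : Finset ι) (u v : ι → E) :
    |Real.sqrt (∑ i ∈ t, ‖u i‖ ^ 2) - Real.sqrt (∑ i ∈ t, ‖v i‖ ^ 2)| ≤
      Real.sqrt (∑ i ∈ t, ‖u i - v i‖ ^ 2) :=
  (sqrt_l2_diff t (fun i => ‖u i‖) fun i => ‖v i‖).trans <| Real.sqrt_le_sqrt <|
    Finset.sum_le_sum fun i _ => by
      rw [← _root_.sq_abs (‖u i‖ - ‖v i‖)]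
      exact pow_le_pow_left₀ (abs_nonneg _) (abs_norm_sub_norm_le _ _) 2

lemma eLpNorm_two_sq {E : Type*} [NormedAddCommGroup E] (h : ℂ → E) :
    eLpNorm h 2 volume ^ 2 = ∫⁻ x, (‖h x‖₊ : ℝ≥0∞) ^ 2 := by
  rw [eLpNorm_eq_lintegral_rpow_enorm_toReal two_ne_zero ENNReal.ofNat_ne_top]
  have h2 : ((2 : ℝ≥0∞)).toReal = 2 := by norm_num
  rw [h2, ← ENNReal.rpow_natCast _ 2, ← ENNReal.rpow_mul]
  norm_num
  rfl

lemma ofReal_sq_real (r : ℝ) : ENNReal.ofReal (r ^ 2) = (‖r‖₊ : ℝ≥0∞) ^ 2 := by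
  rw [← _root_.sq_abs, ← Real.norm_eq_abs, ← enorm_eq_nnnorm, ← ofReal_norm, ← ENNReal.ofReal_pow (norm_nonneg r)]

lemma ofReal_sq_norm {E : Type*} [NormedAddCommGroup E] (u : E) :
    ENNReal.ofReal (‖u‖ ^ 2) = (‖u‖₊ : ℝ≥0∞) ^ 2 := by
  rw [← enorm_eq_nnnorm, ← ofReal_norm, ← ENNReal.ofReal_pow (norm_nonneg u)]

end AuxNorm


lemma key_sq_bound (𝓡 : RotUCF A B) {f g : ℂ → ℂ}
    (hf : AEStronglyMeasurable f volume) (hg : AEStronglyMeasurable g volume)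
    (q : List (ℕ × ℂ)) :
    eLpNorm (fun x => PhiQ 𝓡 q f x - PhiQ 𝓡 q g x) 2 volume ^ 2 ≤
      ∑ s ∈ Gm B 1, eLpNorm (fun x => conv (U 𝓡 (actL s q) f) (⇑𝓡.f0) x
        - conv (U 𝓡 (actL s q) g) (⇑𝓡.f0) x) 2 volume ^ 2 := by
  set D : List (ℕ × ℂ) → ℂ → ℂ := fun p x =>
    conv (U 𝓡 p f) (⇑𝓡.f0) x - conv (U 𝓡 p g) (⇑𝓡.f0) x with hDdef
  have hD : ∀ p, AEStronglyMeasurable (D p) volume := fun p =>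
    (aesm_conv (aesm_U 𝓡 p hf) 𝓡.f0.continuous).sub
      (aesm_conv (aesm_U 𝓡 p hg) 𝓡.f0.continuous)
  have hpt : ∀ x : ℂ, (‖PhiQ 𝓡 q f x - PhiQ 𝓡 q g x‖₊ : ℝ≥0∞) ^ 2 ≤
      ∑ s ∈ Gm B 1, (‖D (actL s q) (s * x)‖₊ : ℝ≥0∞) ^ 2 := by
    intro x
    have habs : |PhiQ 𝓡 q f x - PhiQ 𝓡 q g x| ≤
        Real.sqrt (∑ s ∈ Gm B 1, ‖D (actL s q) (s * x)‖ ^ 2) := by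
      unfold PhiQ
      exact l2_norm_diff (Gm B 1)
        (fun s => conv (U 𝓡 (actL s q) f) (⇑𝓡.f0) (s * x))
        (fun s => conv (U 𝓡 (actL s q) g) (⇑𝓡.f0) (s * x))
    have hsq : (PhiQ 𝓡 q f x - PhiQ 𝓡 q g x) ^ 2 ≤
        ∑ s ∈ Gm B 1, ‖D (actL s q) (s * x)‖ ^ 2 := by
      have hS : 0 ≤ ∑ s ∈ Gm B 1, ‖D (actL s q) (s * x)‖ ^ 2 :=
        Finset.sum_nonneg fun s _ => sq_nonneg _
      calc (PhiQ 𝓡 q f x - PhiQ 𝓡 q g x) ^ 2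
          = |PhiQ 𝓡 q f x - PhiQ 𝓡 q g x| ^ 2 := (_root_.sq_abs _).symm
        _ ≤ Real.sqrt (∑ s ∈ Gm B 1, ‖D (actL s q) (s * x)‖ ^ 2) ^ 2 :=
            pow_le_pow_left₀ (abs_nonneg _) habs 2
        _ = _ := Real.sq_sqrt hS
    calc (‖PhiQ 𝓡 q f x - PhiQ 𝓡 q g x‖₊ : ℝ≥0∞) ^ 2
        = ENNReal.ofReal ((PhiQ 𝓡 q f x - PhiQ 𝓡 q g x) ^ 2) := (ofReal_sq_real _).symm
      _ ≤ ENNReal.ofReal (∑ s ∈ Gm B 1, ‖D (actL s q) (s * x)‖ ^ 2) := ENNReal.ofReal_le_ofReal hsq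
      _ = ∑ s ∈ Gm B 1, (‖D (actL s q) (s * x)‖₊ : ℝ≥0∞) ^ 2 := by
          rw [ENNReal.ofReal_sum_of_nonneg fun s _ => sq_nonneg _]
          exact Finset.sum_congr rfl fun s _ => ofReal_sq_norm _
  calc eLpNorm (fun x => PhiQ 𝓡 q f x - PhiQ 𝓡 q g x) 2 volume ^ 2
      = ∫⁻ x, (‖PhiQ 𝓡 q f x - PhiQ 𝓡 q g x‖₊ : ℝ≥0∞) ^ 2 := eLpNorm_two_sq _
    _ ≤ ∫⁻ x, ∑ s ∈ Gm B 1, (‖D (actL s q) (s * x)‖₊ : ℝ≥0∞) ^ 2 := lintegral_mono hpt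
    _ = ∑ s ∈ Gm B 1, ∫⁻ x, (‖D (actL s q) (s * x)‖₊ : ℝ≥0∞) ^ 2 := by
        refine lintegral_finset_sum' _ fun s hs => ?_
        have h1 : AEMeasurable (fun y => (‖D (actL s q) y‖₊ : ℝ≥0∞) ^ 2) volume :=
          (hD (actL s q)).enorm.pow_const 2
        exact h1.comp_quasiMeasurePreserving
          (mp_rot (norm_of_mem_Gm 𝓡.hB hs)).quasiMeasurePreserving
    _ = ∑ s ∈ Gm B 1, ∫⁻ x, (‖D (actL s q) x‖₊ : ℝ≥0∞) ^ 2 :=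
        Finset.sum_congr rfl fun s hs =>
          lintegral_rot (norm_of_mem_Gm 𝓡.hB hs)
            (fun y => (‖D (actL s q) y‖₊ : ℝ≥0∞) ^ 2)
    _ = ∑ s ∈ Gm B 1, eLpNorm (fun x => conv (U 𝓡 (actL s q) f) (⇑𝓡.f0) x
        - conv (U 𝓡 (actL s q) g) (⇑𝓡.f0) x) 2 volume ^ 2 :=
        Finset.sum_congr rfl fun s _ => (eLpNorm_two_sq _).symm


lemma card_Gm_le (B : ℕ) : (Gm B 1).card ≤ B := by
  refine (Finset.card_image_le).trans ?_
  simp [mstar_one]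

lemma phi0_sq_bound (𝓡 : RotUCF A B) {f g : ℂ → ℂ}
    (hf : AEStronglyMeasurable f volume) (hg : AEStronglyMeasurable g volume) :
    eLpNorm (fun x => Phi0 𝓡 f x - Phi0 𝓡 g x) 2 volume ^ 2 ≤
      eLpNorm (fun x => conv f (⇑𝓡.f0) x - conv g (⇑𝓡.f0) x) 2 volume ^ 2 := by
  have hBpos : (0 : ℝ) < B := by exact_mod_cast Nat.lt_of_lt_of_le Nat.zero_lt_one 𝓡.hB
  set c : ℝ := (B : ℝ) ^ (-(1 : ℝ) / 2) with hc
  have hc0 : 0 ≤ c := Real.rpow_nonneg hBpos.le _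
  have hc2 : c ^ 2 = (B : ℝ)⁻¹ := by
    rw [hc, ← Real.rpow_natCast ((B : ℝ) ^ (-(1 : ℝ) / 2)) 2, ← Real.rpow_mul hBpos.le]
    norm_num
    rw [Real.rpow_neg_one]
  set E : ℂ → ℂ := fun x => conv f (⇑𝓡.f0) x - conv g (⇑𝓡.f0) x with hE
  have hEm : AEStronglyMeasurable E volume :=
    (aesm_conv hf 𝓡.f0.continuous).sub (aesm_conv hg 𝓡.f0.continuous)
  have hpt : ∀ x : ℂ, (‖Phi0 𝓡 f x - Phi0 𝓡 g x‖₊ : ℝ≥0∞) ^ 2 ≤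
      ∑ s ∈ Gm B 1, ENNReal.ofReal (c ^ 2) * (‖E (s * x)‖₊ : ℝ≥0∞) ^ 2 := by
    intro x
    have habs : |Real.sqrt (∑ s ∈ Gm B 1, ‖conv f (⇑𝓡.f0) (s * x)‖ ^ 2) -
        Real.sqrt (∑ s ∈ Gm B 1, ‖conv g (⇑𝓡.f0) (s * x)‖ ^ 2)| ≤
        Real.sqrt (∑ s ∈ Gm B 1, ‖E (s * x)‖ ^ 2) :=
      l2_norm_diff (Gm B 1) (fun s => conv f (⇑𝓡.f0) (s * x))
        (fun s => conv g (⇑𝓡.f0) (s * x))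
    have hS : 0 ≤ ∑ s ∈ Gm B 1, ‖E (s * x)‖ ^ 2 :=
      Finset.sum_nonneg fun s _ => sq_nonneg _
    have hsq : (Phi0 𝓡 f x - Phi0 𝓡 g x) ^ 2 ≤
        c ^ 2 * ∑ s ∈ Gm B 1, ‖E (s * x)‖ ^ 2 := by
      have h1 : (Phi0 𝓡 f x - Phi0 𝓡 g x) ^ 2 =
          c ^ 2 * (Real.sqrt (∑ s ∈ Gm B 1, ‖conv f (⇑𝓡.f0) (s * x)‖ ^ 2) -
            Real.sqrt (∑ s ∈ Gm B 1, ‖conv g (⇑𝓡.f0) (s * x)‖ ^ 2)) ^ 2 := by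
        unfold Phi0; rw [← mul_sub, mul_pow]
      rw [h1]
      refine mul_le_mul_of_nonneg_left ?_ (sq_nonneg c)
      calc (Real.sqrt (∑ s ∈ Gm B 1, ‖conv f (⇑𝓡.f0) (s * x)‖ ^ 2) -
            Real.sqrt (∑ s ∈ Gm B 1, ‖conv g (⇑𝓡.f0) (s * x)‖ ^ 2)) ^ 2
          = |Real.sqrt (∑ s ∈ Gm B 1, ‖conv f (⇑𝓡.f0) (s * x)‖ ^ 2) -
            Real.sqrt (∑ s ∈ Gm B 1, ‖conv g (⇑𝓡.f0) (s * x)‖ ^ 2)| ^ 2 :=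
            (_root_.sq_abs _).symm
        _ ≤ Real.sqrt (∑ s ∈ Gm B 1, ‖E (s * x)‖ ^ 2) ^ 2 :=
            pow_le_pow_left₀ (abs_nonneg _) habs 2
        _ = _ := Real.sq_sqrt hS
    calc (‖Phi0 𝓡 f x - Phi0 𝓡 g x‖₊ : ℝ≥0∞) ^ 2
        = ENNReal.ofReal ((Phi0 𝓡 f x - Phi0 𝓡 g x) ^ 2) := (ofReal_sq_real _).symm
      _ ≤ ENNReal.ofReal (c ^ 2 * ∑ s ∈ Gm B 1, ‖E (s * x)‖ ^ 2) :=
          ENNReal.ofReal_le_ofReal hsq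
      _ = ∑ s ∈ Gm B 1, ENNReal.ofReal (c ^ 2) * (‖E (s * x)‖₊ : ℝ≥0∞) ^ 2 := by
          rw [ENNReal.ofReal_mul (sq_nonneg c),
            ENNReal.ofReal_sum_of_nonneg fun s _ => sq_nonneg _, Finset.mul_sum]
          exact Finset.sum_congr rfl fun s _ => by rw [ofReal_sq_norm]
  have hcard : ((Gm B 1).card : ℝ≥0∞) * ENNReal.ofReal (c ^ 2) ≤ 1 := by
    rw [hc2, ENNReal.ofReal_inv_of_pos hBpos]
    have h1 : ((Gm B 1).card : ℝ≥0∞) ≤ (B : ℝ≥0∞) := by exact_mod_cast card_Gm_le B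
    have h2 : ENNReal.ofReal (B : ℝ) = (B : ℝ≥0∞) := by
      rw [ENNReal.ofReal_natCast]
    calc ((Gm B 1).card : ℝ≥0∞) * (ENNReal.ofReal (B : ℝ))⁻¹
        ≤ (B : ℝ≥0∞) * (ENNReal.ofReal (B : ℝ))⁻¹ := mul_le_mul_left h1 _
      _ = 1 := by
          rw [h2]
          exact ENNReal.mul_inv_cancel (by exact_mod_cast Nat.lt_of_lt_of_le Nat.zero_lt_one 𝓡.hB |>.ne') (ENNReal.natCast_ne_top B)
  calc eLpNorm (fun x => Phi0 𝓡 f x - Phi0 𝓡 g x) 2 volume ^ 2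
      = ∫⁻ x, (‖Phi0 𝓡 f x - Phi0 𝓡 g x‖₊ : ℝ≥0∞) ^ 2 := eLpNorm_two_sq _
    _ ≤ ∫⁻ x, ∑ s ∈ Gm B 1, ENNReal.ofReal (c ^ 2) * (‖E (s * x)‖₊ : ℝ≥0∞) ^ 2 :=
        lintegral_mono hpt
    _ = ∑ s ∈ Gm B 1, ∫⁻ x, ENNReal.ofReal (c ^ 2) * (‖E (s * x)‖₊ : ℝ≥0∞) ^ 2 := by
        refine lintegral_finset_sum' _ fun s hs => ?_
        exact (hEm.enorm.pow_const 2).comp_quasiMeasurePreserving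
          (mp_rot (norm_of_mem_Gm 𝓡.hB hs)).quasiMeasurePreserving |>.const_mul _
    _ = ∑ s ∈ Gm B 1, ENNReal.ofReal (c ^ 2) * ∫⁻ x, (‖E (s * x)‖₊ : ℝ≥0∞) ^ 2 :=
        Finset.sum_congr rfl fun s _ =>
          lintegral_const_mul' _ _ ENNReal.ofReal_ne_top
    _ = ∑ s ∈ Gm B 1, ENNReal.ofReal (c ^ 2) * ∫⁻ x, (‖E x‖₊ : ℝ≥0∞) ^ 2 :=
        Finset.sum_congr rfl fun s hs => by
          rw [lintegral_rot (norm_of_mem_Gm 𝓡.hB hs) (fun y => (‖E y‖₊ : ℝ≥0∞) ^ 2)]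
    _ = ((Gm B 1).card : ℝ≥0∞) * ENNReal.ofReal (c ^ 2) * ∫⁻ x, (‖E x‖₊ : ℝ≥0∞) ^ 2 := by
        rw [Finset.sum_const, nsmul_eq_mul, mul_assoc]
    _ ≤ 1 * ∫⁻ x, (‖E x‖₊ : ℝ≥0∞) ^ 2 := mul_le_mul_left hcard _
    _ = eLpNorm (fun x => conv f (⇑𝓡.f0) x - conv g (⇑𝓡.f0) x) 2 volume ^ 2 := by
        rw [one_mul, eLpNorm_two_sq]


lemma actL_valid {B : ℕ} (hB : 1 ≤ B) {s : ℂ} (hs : s ∈ Gm B 1) {p : List (ℕ × ℂ)}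
    (hp : ValidList B p) : ValidList B (actL s p) := by
  intro a ha
  simp only [actL, List.mem_map] at ha
  obtain ⟨b, hb, rfl⟩ := ha
  exact ⟨(hp b hb).1, G_mul_mem_Gm hB hs (hp b hb).2⟩

lemma actL_pair_inj {B : ℕ} (hB : 1 ≤ B) {s s' : ℂ} (hs : s ∈ Gm B 1) (hs' : s' ∈ Gm B 1)
    {p p' : List (ℕ × ℂ)} (hne : p ≠ []) (hne' : p' ≠ [])
    (hph : transIdx B p.headI) (hph' : transIdx B p'.headI)
    (h : actL s p = actL s' p') : s = s' ∧ p = p' := by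
  obtain ⟨a, q, rfl⟩ := List.exists_cons_of_ne_nil hne
  obtain ⟨a', q', rfl⟩ := List.exists_cons_of_ne_nil hne'
  simp only [actL, List.map_cons, List.cons.injEq, Prod.mk.injEq] at h
  obtain ⟨⟨h1, h2⟩, h3⟩ := h
  simp only [List.headI_cons] at hph hph'
  obtain ⟨-, j, hj, haj⟩ := hph
  obtain ⟨-, j', hj', haj'⟩ := hph'
  rw [← h1] at haj' hj'
  rw [haj, haj'] at h2
  obtain ⟨hss1, hjj⟩ := decomp_unique hB hs hs' hj hj' h2
  subst hss1
  subst hjj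
  refine ⟨rfl, ?_⟩
  have ha : a = a' := Prod.ext h1 (by rw [haj, haj'])
  subst ha
  have hs0 : s ≠ 0 := ne_zero_of_mem_Gm hB hs
  have hinj : Function.Injective (fun b : ℕ × ℂ => (b.1, s * b.2)) := by
    intro b1 b2 hb
    simp only [Prod.mk.injEq] at hb
    exact Prod.ext hb.1 (mul_left_cancel₀ hs0 hb.2)
  have hq : q = q' := List.map_injective_iff.mpr hinj h3
  rw [hq]

/-- difference bound between the two scattering transforms:
for all `f, g ∈ L²(ℝ²)`,
`‖Φ₀f − Φ₀g‖² + ∑_{k≥1} ∑_{q∈𝒬_k} ‖Φ_q f − Φ_q g‖²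
  ≤ ‖f ⋆ f₀ − g ⋆ f₀‖² + ∑_{k≥1} ∑_{p∈𝒢^k} ‖U[p]f ⋆ f₀ − U[p]g ⋆ f₀‖²`. -/
theorem scattering_difference_bound (𝓡 : RotUCF A B) (f g : ℂ → ℂ)
    (hf : MemLp f 2 volume) (hg : MemLp g 2 volume) :
    eLpNorm (fun x => Phi0 𝓡 f x - Phi0 𝓡 g x) 2 volume ^ 2
      + ∑' k : ℕ, ∑' q : Qk B (k + 1),
          eLpNorm (fun x => PhiQ 𝓡 q.1 f x - PhiQ 𝓡 q.1 g x) 2 volume ^ 2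
    ≤ eLpNorm (fun x => conv f (⇑𝓡.f0) x - conv g (⇑𝓡.f0) x) 2 volume ^ 2
      + ∑' k : ℕ, ∑' p : Gk B (k + 1),
          eLpNorm (fun x => conv (U 𝓡 p.1 f) (⇑𝓡.f0) x - conv (U 𝓡 p.1 g) (⇑𝓡.f0) x) 2
            volume ^ 2 := by
  have hB : 1 ≤ B := 𝓡.hB
  refine add_le_add (phi0_sq_bound 𝓡 hf.aestronglyMeasurable hg.aestronglyMeasurable) ?_
  refine ENNReal.tsum_le_tsum fun k => ?_
  set T : List (ℕ × ℂ) → ℝ≥0∞ := fun p =>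
    eLpNorm (fun x => conv (U 𝓡 p f) (⇑𝓡.f0) x - conv (U 𝓡 p g) (⇑𝓡.f0) x) 2 volume ^ 2
    with hT
  have hinj : Function.Injective (fun z : Qk B (k + 1) × {x // x ∈ Gm B 1} =>
      (⟨actL (↑z.2) z.1.1, by
        refine ⟨?_, ?_⟩
        · rw [actL, List.length_map]; exact z.1.2.1
        · exact actL_valid hB z.2.2 z.1.2.2.1⟩ : Gk B (k + 1))) := by
    rintro ⟨q, s⟩ ⟨q', s'⟩ hz
    have heq : actL (↑s) q.1 = actL (↑s') q'.1 := congrArg Subtype.val hz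
    have hq : q.1 ≠ [] := by
      intro hnil
      have := q.2.1
      rw [hnil] at this
      simp at this
    have hq' : q'.1 ≠ [] := by
      intro hnil
      have := q'.2.1
      rw [hnil] at this
      simp at this
    obtain ⟨hss, hpp⟩ := actL_pair_inj hB s.2 s'.2 hq hq' q.2.2.2 q'.2.2.2 heq
    exact Prod.ext (Subtype.ext hpp) (Subtype.ext hss)
  calc ∑' q : Qk B (k + 1),
        eLpNorm (fun x => PhiQ 𝓡 q.1 f x - PhiQ 𝓡 q.1 g x) 2 volume ^ 2
      ≤ ∑' q : Qk B (k + 1), ∑ s ∈ Gm B 1, T (actL s q.1) :=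
        ENNReal.tsum_le_tsum fun q =>
          key_sq_bound 𝓡 hf.aestronglyMeasurable hg.aestronglyMeasurable q.1
    _ = ∑' q : Qk B (k + 1), ∑' s : {x // x ∈ Gm B 1}, T (actL (↑s) q.1) :=
        tsum_congr fun q => (Finset.tsum_subtype _ _).symm
    _ = ∑' z : Qk B (k + 1) × {x // x ∈ Gm B 1}, T (actL (↑z.2) z.1.1) :=
        (ENNReal.tsum_prod' (f := fun z : Qk B (k + 1) × {x // x ∈ Gm B 1} => T (actL (↑z.2) z.1.1))).symm
    _ ≤ ∑' p : Gk B (k + 1), T p.1 :=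
        ENNReal.tsum_comp_le_tsum_of_injective hinj fun p => T p.1

end
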